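/- Triangle inequality for the optimal transition coupling cost: Let P₁, P₂, P₃ be irreducible row-stochastic matrices on a finite set X with unique stationary distributions p₁, p₂, p₃, and let c : X × X → ℝ₊ satisfy the triangle inequality c(x,z) ≤ c(x,y) + c(y,z). Define ρ(Pᵢ, Pⱼ) = min over pairs (λ, R) with R a transition coupling of Pᵢ and Pⱼ and λ a stationary distribution of R, of ∑_{(x,y)} c(x,y) λ(x,y). Then ρ(P₁,P₃) ≤ ρ(P₁,P₂) + ρ(P₂,P₃). -/

import Mathlib

open Finset

def MatIrreducible {S : Type*} [Fintype S] [DecidableEq S] (U : Matrix S S ℝ) : Prop :=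
  ∀ s s' : S, ∃ k : ℕ, 1 ≤ k ∧ 0 < (U ^ k) s s'

/-- The optimal transition coupling cost between chains with transition matrices `P` and `Q`,
for a cost `c` on pairs of states: the infimum (a minimum, by compactness) of the expected
cost over stationary distributions of transition couplings of `P` and `Q`. -/
noncomputable def otcCost (d : ℕ) (c : Fin d → Fin d → ℝ)
    (P Q : Matrix (Fin d) (Fin d) ℝ) : ℝ :=
  sInf {v | ∃ lam : Fin d × Fin d → ℝ, ∃ R : Fin d × Fin d → Fin d × Fin d → ℝ,
    (∀ s s', 0 ≤ R s s') ∧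
    (∀ x y x', ∑ y', R (x, y) (x', y') = P x x') ∧
    (∀ x y y', ∑ x', R (x, y) (x', y') = Q y y') ∧
    (∀ s, 0 ≤ lam s) ∧ (∑ s, lam s = 1) ∧
    (∀ s', ∑ s, lam s * R s s' = lam s') ∧
    v = ∑ s : Fin d × Fin d, c s.1 s.2 * lam s}

/-!
Take stationary couplings `(μ₁₂, R₁₂)` of `P₁, P₂` and `(μ₂₃, R₂₃)` of `P₂, P₃`. The `P₂`-marginals
of `μ₁₂` and `μ₂₃` are stationary distributions of the irreducible `P₂`, hence equal, so `μ₁₂` and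
`μ₂₃` glue along the middle coordinate into a law on triples, and likewise, row by row, `R₁₂` and
`R₂₃` glue into a stochastic matrix on triples. This chain preserves the compact convex set of laws
with marginals `μ₁₂` and `μ₂₃`, so Cesàro averages of its orbit converge to a stationary law `η` in
that set. Projecting `η` and its transitions to the outer coordinates gives a stationary coupling
of `P₁, P₃`, and integrating `c x z ≤ c x y + c y z` against `η` bounds its cost by the sum of the
two given costs.
-/

open Matrix Filter Topology Set
open scoped Kronecker

theorem ContinuousLinearMap.exists_mem_eq_self_of_mapsTo {E : Type*} [NormedAddCommGroup E]
    [NormedSpace ℝ E] (f : E →L[ℝ] E) {K : Set E} (hK : IsCompact K) (hKc : Convex ℝ K)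
    (hne : K.Nonempty) (hfK : MapsTo f K K) : ∃ x ∈ K, f x = x := by
  obtain ⟨x₀, hx₀⟩ := hne
  set avg : ℕ → E := fun n => ∑ k ∈ range (n + 1), ((n : ℝ) + 1)⁻¹ • f^[k] x₀
  have havg : ∀ n, avg n ∈ K := fun n =>
    hKc.sum_mem (fun _ _ => by positivity) (by simp [field]) fun k _ => hfK.iterate k hx₀
  have hdefect : ∀ n, f (avg n) - avg n = ((n : ℝ) + 1)⁻¹ • (f^[n + 1] x₀ - x₀) := by
    intro n
    simp only [avg, map_sum, map_smul, ← Function.iterate_succ_apply' f, ← sum_sub_distrib,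
      ← smul_sub, ← smul_sum, sum_range_sub (fun k => f^[k] x₀), Function.iterate_zero_apply]
  obtain ⟨C, hC⟩ := hK.isBounded.exists_norm_le
  have hsmall : Tendsto (fun n => f (avg n) - avg n) atTop (𝓝 0) := by
    simp only [hdefect]
    refine (tendsto_one_div_add_atTop_nhds_zero_nat.congr fun n => one_div _)
      |>.zero_smul_isBoundedUnder_le ⟨C + C, eventually_map.2 (.of_forall fun n => ?_)⟩
    exact (norm_sub_le _ _).trans (add_le_add (hC _ (hfK.iterate _ hx₀)) (hC _ hx₀))
  obtain ⟨x, hxK, φ, hφ, hlim⟩ := hK.tendsto_subseq havg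
  refine ⟨x, hxK, sub_eq_zero.1 (tendsto_nhds_unique ?_ (hsmall.comp hφ.tendsto_atTop))⟩
  exact ((f.continuous.tendsto x).comp hlim).sub hlim

namespace Matrix

variable {ι : Type*} [Fintype ι]

theorem exists_vecMul_eq_self_mem {M : Matrix ι ι ℝ} {K : Set (ι → ℝ)} (hK : IsCompact K)
    (hKc : Convex ℝ K) (hne : K.Nonempty) (hMK : MapsTo (· ᵥ* M) K K) : ∃ μ ∈ K, μ ᵥ* M = μ :=
  (LinearMap.toContinuousLinearMap (vecMulLinear M)).exists_mem_eq_self_of_mapsTo hK hKc hne hMK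

variable [DecidableEq ι] {M : Matrix ι ι ℝ} {μ ν : ι → ℝ}

theorem vecMul_mem_stdSimplex (hM : M ∈ rowStochastic ℝ ι) (hμ : μ ∈ stdSimplex ℝ ι) :
    μ ᵥ* M ∈ stdSimplex ℝ ι :=
  ⟨nonneg_vecMul_of_mem_rowStochastic hM hμ.1, by
    simpa [dotProduct_one] using
      vecMul_dotProduct_one_eq_one_rowStochastic hM (by simpa [dotProduct_one] using hμ.2)⟩

theorem vecMul_pow_eq_self (hμ : μ ᵥ* M = μ) (k : ℕ) : μ ᵥ* (M ^ k) = μ := by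
  induction k with
  | zero => simp
  | succ k ih => rw [pow_succ, ← vecMul_vecMul, ih, hμ]

theorem eq_zero_of_vecMul_eq_self_of_apply_eq_zero (hM : ∀ i j, 0 ≤ M i j)
    (hirr : MatIrreducible M) (hμ0 : ∀ i, 0 ≤ μ i) (hμ : μ ᵥ* M = μ) {i : ι} (hi : μ i = 0) :
    μ = 0 := by
  funext j
  obtain ⟨k, -, hk⟩ := hirr j i
  have : μ j * (M ^ k) j i ≤ (μ ᵥ* M ^ k) i :=
    single_le_sum (f := fun l => μ l * (M ^ k) l i)
      (fun l _ => mul_nonneg (hμ0 l) (pow_apply_nonneg hM k l i)) (mem_univ j)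
  rw [vecMul_pow_eq_self hμ k, hi] at this
  exact le_antisymm (nonpos_of_mul_nonpos_left this hk) (hμ0 j)

theorem eq_of_vecMul_eq_self (hM : ∀ i j, 0 ≤ M i j) (hirr : MatIrreducible M)
    (hμ : μ ∈ stdSimplex ℝ ι) (hν : ν ∈ stdSimplex ℝ ι) (hμM : μ ᵥ* M = μ) (hνM : ν ᵥ* M = ν) :
    μ = ν := by
  rcases isEmpty_or_nonempty ι with _ | _
  · exact Subsingleton.elim _ _
  have hνpos : ∀ i, 0 < ν i := fun i => (hν.1 i).lt_of_ne' fun h => by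
    simpa [eq_zero_of_vecMul_eq_self_of_apply_eq_zero hM hirr hν.1 hνM h] using hν.2
  -- `μ - t • ν` with `t = min μ/ν` is a nonnegative stationary vector with a zero entry
  obtain ⟨i₀, -, hi₀⟩ := exists_min_image univ (fun i => μ i / ν i) univ_nonempty
  set t := μ i₀ / ν i₀
  have hw0 : ∀ i, 0 ≤ (μ - t • ν) i := fun i => by
    simpa [sub_nonneg, ← le_div_iff₀ (hνpos i)] using hi₀ i (mem_univ i)
  have hw : (μ - t • ν) ᵥ* M = μ - t • ν := by rw [sub_vecMul, smul_vecMul, hμM, hνM]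
  have hwi₀ : (μ - t • ν) i₀ = 0 := by simp [t, div_mul_cancel₀ _ (hνpos i₀).ne']
  have hμt : μ = t • ν :=
    sub_eq_zero.1 (eq_zero_of_vecMul_eq_self_of_apply_eq_zero hM hirr hw0 hw hwi₀)
  have ht : 1 = t := by simpa [hμ.2, hν.2, ← mul_sum] using congrArg (fun v => ∑ i, v i) hμt
  rwa [← ht, one_smul] at hμt

end Matrix

variable {X Y Z : Type*}

theorem marginal_fst_mem_stdSimplex [Fintype X] [Fintype Y] {μ : X × Y → ℝ}
    (hμ : μ ∈ stdSimplex ℝ (X × Y)) : (fun x => ∑ y, μ (x, y)) ∈ stdSimplex ℝ X :=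
  ⟨fun _ => sum_nonneg fun _ _ => hμ.1 _, by rw [← Fintype.sum_prod_type]; exact hμ.2⟩

theorem marginal_snd_mem_stdSimplex [Fintype X] [Fintype Y] {μ : X × Y → ℝ}
    (hμ : μ ∈ stdSimplex ℝ (X × Y)) : (fun y => ∑ x, μ (x, y)) ∈ stdSimplex ℝ Y :=
  ⟨fun _ => sum_nonneg fun _ _ => hμ.1 _, by rw [← Fintype.sum_prod_type_right]; exact hμ.2⟩

structure IsTransitionCoupling [Fintype X] [Fintype Y] (P : Matrix X X ℝ) (Q : Matrix Y Y ℝ)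
    (R : Matrix (X × Y) (X × Y) ℝ) : Prop where
  nonneg : ∀ s s', 0 ≤ R s s'
  sum_snd : ∀ x y x', ∑ y', R (x, y) (x', y') = P x x'
  sum_fst : ∀ x y y', ∑ x', R (x, y) (x', y') = Q y y'

def stationaryCouplingCosts [Fintype X] [Fintype Y] (c : X → Y → ℝ) (P : Matrix X X ℝ)
    (Q : Matrix Y Y ℝ) : Set ℝ :=
  {v | ∃ μ R, IsTransitionCoupling P Q R ∧ μ ∈ stdSimplex ℝ (X × Y) ∧ μ ᵥ* R = μ ∧
    v = ∑ s, c s.1 s.2 * μ s}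

theorem otcCost_eq_sInf (d : ℕ) (c : Fin d → Fin d → ℝ) (P Q : Matrix (Fin d) (Fin d) ℝ) :
    otcCost d c P Q = sInf (stationaryCouplingCosts c P Q) := by
  unfold otcCost stationaryCouplingCosts
  congr! 1
  ext v
  simp only [funext_iff, vecMul, dotProduct]
  exact ⟨fun ⟨μ, R, h0, h1, h2, h3, h4, h5, h6⟩ => ⟨μ, R, ⟨h0, h1, h2⟩, ⟨h3, h4⟩, h5, h6⟩,
    fun ⟨μ, R, ⟨h0, h1, h2⟩, ⟨h3, h4⟩, h5, h6⟩ => ⟨μ, R, h0, h1, h2, h3, h4, h5, h6⟩⟩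

section TransitionCoupling

variable [Fintype X] [Fintype Y] {P : Matrix X X ℝ} {Q : Matrix Y Y ℝ}

theorem isTransitionCoupling_kronecker [DecidableEq X] [DecidableEq Y]
    (hP : P ∈ rowStochastic ℝ X) (hQ : Q ∈ rowStochastic ℝ Y) :
    IsTransitionCoupling P Q (P ⊗ₖ Q) where
  nonneg _ _ := mul_nonneg (nonneg_of_mem_rowStochastic hP) (nonneg_of_mem_rowStochastic hQ)
  sum_snd x y x' := by simp [← mul_sum, sum_row_of_mem_rowStochastic hQ]
  sum_fst x y y' := by simp [← sum_mul, sum_row_of_mem_rowStochastic hP]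

namespace IsTransitionCoupling

variable {R : Matrix (X × Y) (X × Y) ℝ}

theorem mem_rowStochastic [DecidableEq X] [DecidableEq Y] (hR : IsTransitionCoupling P Q R)
    (hP : P ∈ rowStochastic ℝ X) : R ∈ rowStochastic ℝ (X × Y) :=
  mem_rowStochastic_iff_sum.2 ⟨hR.nonneg, fun s => by
    simp [Fintype.sum_prod_type, hR.sum_snd, sum_row_of_mem_rowStochastic hP]⟩

theorem vecMul_marginal_fst_eq_self (hR : IsTransitionCoupling P Q R) {μ : X × Y → ℝ}
    (hμ : μ ᵥ* R = μ) : (fun x => ∑ y, μ (x, y)) ᵥ* P = fun x => ∑ y, μ (x, y) := by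
  funext x'
  calc ∑ x, (∑ y, μ (x, y)) * P x x' = ∑ x, ∑ y, μ (x, y) * ∑ y', R (x, y) (x', y') := by
        simp only [sum_mul, hR.sum_snd]
    _ = ∑ y', (μ ᵥ* R) (x', y') := by
        simp only [vecMul, dotProduct, Fintype.sum_prod_type, mul_sum]
        exact (sum_congr rfl fun _ _ => sum_comm).trans sum_comm
    _ = ∑ y', μ (x', y') := by rw [hμ]

theorem vecMul_marginal_snd_eq_self (hR : IsTransitionCoupling P Q R) {μ : X × Y → ℝ}
    (hμ : μ ᵥ* R = μ) : (fun y => ∑ x, μ (x, y)) ᵥ* Q = fun y => ∑ x, μ (x, y) := by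
  funext y'
  calc ∑ y, (∑ x, μ (x, y)) * Q y y' = ∑ y, ∑ x, μ (x, y) * ∑ x', R (x, y) (x', y') := by
        simp only [sum_mul, hR.sum_fst]
    _ = ∑ x', (μ ᵥ* R) (x', y') := by
        simp only [vecMul, dotProduct, Fintype.sum_prod_type_right, mul_sum]
        exact (sum_congr rfl fun _ _ => sum_comm).trans sum_comm
    _ = ∑ x', μ (x', y') := by rw [hμ]

end IsTransitionCoupling

-- `F` is the joint law of two consecutive states of a stationary chain whose states have law `ν`.
theorem exists_isTransitionCoupling_of_flow [DecidableEq X] [DecidableEq Y]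
    (hP : P ∈ rowStochastic ℝ X) (hQ : Q ∈ rowStochastic ℝ Y)
    {ν : X × Y → ℝ} {F : Matrix (X × Y) (X × Y) ℝ} (hF : ∀ s s', 0 ≤ F s s')
    (hFP : ∀ x y x', ∑ y', F (x, y) (x', y') = ν (x, y) * P x x')
    (hFQ : ∀ x y y', ∑ x', F (x, y) (x', y') = ν (x, y) * Q y y')
    (hFν : ∀ s', ∑ s, F s s' = ν s') :
    ∃ R, IsTransitionCoupling P Q R ∧ ν ᵥ* R = ν := by
  have hν : ∀ s, 0 ≤ ν s := fun s => hFν s ▸ sum_nonneg fun s' _ => hF s' s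
  have hF0 : ∀ s s', ν s = 0 → F s s' = 0 := fun s s' h => by
    refine le_antisymm ?_ (hF s s')
    calc F s s' ≤ ∑ y', F s (s'.1, y') :=
          single_le_sum (fun y' _ => hF s (s'.1, y')) (mem_univ s'.2)
      _ = 0 := by rw [hFP s.1 s.2, h, zero_mul]
  have hPQ := isTransitionCoupling_kronecker hP hQ
  let R s s' := if ν s = 0 then (P ⊗ₖ Q) s s' else F s s' / ν s
  have hνR : ∀ s s', ν s * R s s' = F s s' := fun s s' => by
    by_cases h : ν s = 0 <;> simp [R, h, hF0, mul_div_cancel₀]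
  refine ⟨R, ⟨fun s s' => ?_, fun x y x' => ?_, fun x y y' => ?_⟩, funext fun s' => ?_⟩
  · by_cases h : ν s = 0
    · simpa [R, h] using hPQ.nonneg s s'
    · simpa [R, h] using div_nonneg (hF s s') (hν s)
  · by_cases h : ν (x, y) = 0
    · simpa [R, h] using hPQ.sum_snd x y x'
    · exact mul_left_cancel₀ h (by simp only [mul_sum, hνR, hFP])
  · by_cases h : ν (x, y) = 0
    · simpa [R, h] using hPQ.sum_fst x y y'
    · exact mul_left_cancel₀ h (by simp only [mul_sum, hνR, hFQ])
  · simp only [vecMul, dotProduct, hνR, hFν]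

theorem stationaryCouplingCosts_nonempty [DecidableEq X] [DecidableEq Y] [Nonempty X]
    [Nonempty Y] (c : X → Y → ℝ) (hP : P ∈ rowStochastic ℝ X) (hQ : Q ∈ rowStochastic ℝ Y) :
    (stationaryCouplingCosts c P Q).Nonempty := by
  have hPQ := isTransitionCoupling_kronecker hP hQ
  obtain ⟨μ, hμ, hμR⟩ := exists_vecMul_eq_self_mem (isCompact_stdSimplex ℝ (X × Y))
    (convex_stdSimplex ℝ _) ⟨_, single_mem_stdSimplex ℝ (Classical.arbitrary _)⟩
    fun _ => vecMul_mem_stdSimplex (hPQ.mem_rowStochastic hP)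
  exact ⟨_, μ, _, hPQ, hμ, hμR, rfl⟩

theorem bddBelow_stationaryCouplingCosts (c : X → Y → ℝ) :
    BddBelow (stationaryCouplingCosts c P Q) := by
  refine ((isCompact_stdSimplex ℝ (X × Y)).image (f := fun μ => ∑ s, c s.1 s.2 * μ s)
    (by fun_prop)).bddBelow.mono ?_
  rintro _ ⟨μ, R, -, hμ, -, rfl⟩
  exact ⟨μ, hμ, rfl⟩

end TransitionCoupling

-- In the lemmas below `α (·, y)` and `β (y, ·)` vanish where `q y = 0`, so dividing by `0` is
-- harmless.
noncomputable def glue (α : X × Y → ℝ) (β : Y × Z → ℝ) (q : Y → ℝ) (t : X × Y × Z) : ℝ :=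
  α (t.1, t.2.1) * β t.2 / q t.2.1

section Glue

variable {α : X × Y → ℝ} {β : Y × Z → ℝ} {q : Y → ℝ}

theorem glue_nonneg [Fintype X] (hα : ∀ s, 0 ≤ α s) (hβ : ∀ s, 0 ≤ β s)
    (hαq : ∀ y, ∑ x, α (x, y) = q y) (t : X × Y × Z) : 0 ≤ glue α β q t :=
  div_nonneg (mul_nonneg (hα _) (hβ _)) (hαq t.2.1 ▸ sum_nonneg fun _ _ => hα _)

theorem sum_glue_snd [Fintype X] [Fintype Z] (hα : ∀ s, 0 ≤ α s)
    (hαq : ∀ y, ∑ x, α (x, y) = q y) (hβq : ∀ y, ∑ z, β (y, z) = q y) (x : X) (y : Y) :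
    ∑ z, glue α β q (x, y, z) = α (x, y) := by
  simp only [glue, mul_div_assoc, ← mul_sum, ← sum_div, hβq]
  by_cases hy : q y = 0
  · have : α (x, y) ≤ q y := hαq y ▸ single_le_sum (fun x _ => hα (x, y)) (mem_univ x)
    simp [le_antisymm (hy ▸ this) (hα _)]
  · rw [div_self hy, mul_one]

theorem sum_glue_fst [Fintype X] [Fintype Z] (hβ : ∀ s, 0 ≤ β s)
    (hαq : ∀ y, ∑ x, α (x, y) = q y) (hβq : ∀ y, ∑ z, β (y, z) = q y) (y : Y) (z : Z) :
    ∑ x, glue α β q (x, y, z) = β (y, z) := by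
  simp only [glue, mul_div_right_comm _ (β _), ← sum_mul, ← sum_div, hαq]
  by_cases hy : q y = 0
  · have : β (y, z) ≤ q y := hβq y ▸ single_le_sum (fun z _ => hβ (y, z)) (mem_univ z)
    simp [le_antisymm (hy ▸ this) (hβ _)]
  · rw [div_self hy, one_mul]

end Glue

section Marginal

def marginal₁₂ [Fintype Z] : (X × Y × Z → ℝ) →ₗ[ℝ] X × Y → ℝ where
  toFun v p := ∑ z, v (p.1, p.2, z)
  map_add' v w := by ext; simp [sum_add_distrib]
  map_smul' a v := by ext; simp [mul_sum]

def marginal₂₃ [Fintype X] : (X × Y × Z → ℝ) →ₗ[ℝ] Y × Z → ℝ where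
  toFun v p := ∑ x, v (x, p)
  map_add' v w := by ext; simp [sum_add_distrib]
  map_smul' a v := by ext; simp [mul_sum]

def marginal₁₃ [Fintype Y] : (X × Y × Z → ℝ) →ₗ[ℝ] X × Z → ℝ where
  toFun v p := ∑ y, v (p.1, y, p.2)
  map_add' v w := by ext; simp [sum_add_distrib]
  map_smul' a v := by ext; simp [mul_sum]

variable (v : X × Y × Z → ℝ)

@[simp] theorem marginal₁₂_apply [Fintype Z] (x : X) (y : Y) :
    marginal₁₂ v (x, y) = ∑ z, v (x, y, z) := rfl

@[simp] theorem marginal₂₃_apply [Fintype X] (p : Y × Z) : marginal₂₃ v p = ∑ x, v (x, p) := rfl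

@[simp] theorem marginal₁₃_apply [Fintype Y] (x : X) (z : Z) :
    marginal₁₃ v (x, z) = ∑ y, v (x, y, z) := rfl

variable [Fintype X] [Fintype Y] [Fintype Z]

theorem sum_marginal₁₂_mul (f : X × Y → ℝ) :
    ∑ p, marginal₁₂ v p * f p = ∑ t, v t * f (t.1, t.2.1) := by
  simp [Fintype.sum_prod_type, sum_mul]

theorem sum_marginal₂₃_mul (f : Y × Z → ℝ) :
    ∑ p, marginal₂₃ v p * f p = ∑ t, v t * f t.2 := by
  simp [Fintype.sum_prod_type_right (f := fun t => v t * f t.2), sum_mul]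

theorem sum_marginal₁₃_mul (f : X × Z → ℝ) :
    ∑ p, marginal₁₃ v p * f p = ∑ t, v t * f (t.1, t.2.2) := by
  simp only [Fintype.sum_prod_type, marginal₁₃_apply, sum_mul]
  exact sum_congr rfl fun _ _ => sum_comm

theorem marginal₁₂_vecMul {Q : Matrix (X × Y × Z) (X × Y × Z) ℝ} {R : Matrix (X × Y) (X × Y) ℝ}
    (hQ : ∀ s x' y', ∑ z', Q s (x', y', z') = R (s.1, s.2.1) (x', y')) :
    marginal₁₂ (v ᵥ* Q) = marginal₁₂ v ᵥ* R := by
  ext ⟨x', y'⟩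
  calc ∑ z', ∑ t, v t * Q t (x', y', z') = ∑ t, v t * R (t.1, t.2.1) (x', y') := by
        simp only [← hQ, mul_sum]; exact sum_comm
    _ = _ := (sum_marginal₁₂_mul v (R · (x', y'))).symm

theorem marginal₂₃_vecMul {Q : Matrix (X × Y × Z) (X × Y × Z) ℝ} {R : Matrix (Y × Z) (Y × Z) ℝ}
    (hQ : ∀ s y' z', ∑ x', Q s (x', y', z') = R s.2 (y', z')) :
    marginal₂₃ (v ᵥ* Q) = marginal₂₃ v ᵥ* R := by
  ext p'
  calc ∑ x', ∑ t, v t * Q t (x', p') = ∑ t, v t * R t.2 p' := by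
        simp only [← hQ, mul_sum]; exact sum_comm
    _ = _ := (sum_marginal₂₃_mul v (R · p')).symm

theorem marginal₁₃_mem_stdSimplex (hv : v ∈ stdSimplex ℝ (X × Y × Z)) :
    marginal₁₃ v ∈ stdSimplex ℝ (X × Z) :=
  ⟨fun _ => sum_nonneg fun _ _ => hv.1 _, by simpa [hv.2] using sum_marginal₁₃_mul v 1⟩

theorem sum_cost_marginal₁₃_le {c₁₂ : X → Y → ℝ} {c₂₃ : Y → Z → ℝ} {c₁₃ : X → Z → ℝ}
    (htri : ∀ x y z, c₁₃ x z ≤ c₁₂ x y + c₂₃ y z) (hv : ∀ t, 0 ≤ v t) :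
    ∑ p, c₁₃ p.1 p.2 * marginal₁₃ v p ≤
      ∑ p, c₁₂ p.1 p.2 * marginal₁₂ v p + ∑ p, c₂₃ p.1 p.2 * marginal₂₃ v p := by
  simp only [mul_comm (c₁₃ _ _), mul_comm (c₁₂ _ _), mul_comm (c₂₃ _ _), sum_marginal₁₃_mul,
    sum_marginal₁₂_mul, sum_marginal₂₃_mul, ← sum_add_distrib, ← mul_add]
  exact sum_le_sum fun t _ => mul_le_mul_of_nonneg_left (htri _ _ _) (hv t)

end Marginal

theorem exists_isTransitionCoupling_marginal₁₃ [Fintype X] [Fintype Y] [Fintype Z]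
    [DecidableEq X] [DecidableEq Z] {P₁ : Matrix X X ℝ} {P₃ : Matrix Z Z ℝ}
    (hP₁ : P₁ ∈ rowStochastic ℝ X) (hP₃ : P₃ ∈ rowStochastic ℝ Z)
    {Q : Matrix (X × Y × Z) (X × Y × Z) ℝ} (hQ : ∀ s t, 0 ≤ Q s t)
    (hQ₁ : ∀ x y z x', ∑ y', ∑ z', Q (x, y, z) (x', y', z') = P₁ x x')
    (hQ₃ : ∀ x y z z', ∑ y', ∑ x', Q (x, y, z) (x', y', z') = P₃ z z')
    {η : X × Y × Z → ℝ} (hη : ∀ t, 0 ≤ η t) (hηQ : η ᵥ* Q = η) :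
    ∃ R, IsTransitionCoupling P₁ P₃ R ∧ marginal₁₃ η ᵥ* R = marginal₁₃ η := by
  let F : Matrix (X × Z) (X × Z) ℝ := fun p p' =>
    marginal₁₃ (fun t => ∑ y', η t * Q t (p'.1, y', p'.2)) p
  refine exists_isTransitionCoupling_of_flow hP₁ hP₃ (F := F)
    (fun p p' => sum_nonneg fun _ _ => sum_nonneg fun _ _ => mul_nonneg (hη _) (hQ _ _))
    (fun x z x' => ?_) (fun x z z' => ?_) (fun p' => ?_)
  · calc ∑ z', F (x, z) (x', z')
        = ∑ y, η (x, y, z) * ∑ y', ∑ z', Q (x, y, z) (x', y', z') := by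
          simp only [F, marginal₁₃_apply, mul_sum]
          exact sum_comm.trans (sum_congr rfl fun _ _ => sum_comm)
      _ = marginal₁₃ η (x, z) * P₁ x x' := by simp only [hQ₁, marginal₁₃_apply, sum_mul]
  · calc ∑ x', F (x, z) (x', z')
        = ∑ y, η (x, y, z) * ∑ y', ∑ x', Q (x, y, z) (x', y', z') := by
          simp only [F, marginal₁₃_apply, mul_sum]
          exact sum_comm.trans (sum_congr rfl fun _ _ => sum_comm)
      _ = marginal₁₃ η (x, z) * P₃ z z' := by simp only [hQ₃, marginal₁₃_apply, sum_mul]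
  · calc ∑ p, F p p' = ∑ t, ∑ y', η t * Q t (p'.1, y', p'.2) := by
          simpa using sum_marginal₁₃_mul (fun t => ∑ y', η t * Q t (p'.1, y', p'.2)) 1
      _ = ∑ y', (η ᵥ* Q) (p'.1, y', p'.2) := sum_comm
      _ = marginal₁₃ η p' := by rw [hηQ]; rfl

noncomputable def glueKernel (R₁₂ : Matrix (X × Y) (X × Y) ℝ) (R₂₃ : Matrix (Y × Z) (Y × Z) ℝ)
    (P : Matrix Y Y ℝ) : Matrix (X × Y × Z) (X × Y × Z) ℝ :=
  fun s => glue (R₁₂ (s.1, s.2.1)) (R₂₃ s.2) (P s.2.1)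

section GlueKernel

variable [Fintype X] [Fintype Y] [Fintype Z] {P₁ : Matrix X X ℝ} {P₂ : Matrix Y Y ℝ}
  {P₃ : Matrix Z Z ℝ} {R₁₂ : Matrix (X × Y) (X × Y) ℝ} {R₂₃ : Matrix (Y × Z) (Y × Z) ℝ}

theorem glueKernel_nonneg (h₁₂ : IsTransitionCoupling P₁ P₂ R₁₂)
    (h₂₃ : IsTransitionCoupling P₂ P₃ R₂₃) (s t : X × Y × Z) : 0 ≤ glueKernel R₁₂ R₂₃ P₂ s t :=
  glue_nonneg (h₁₂.nonneg _) (h₂₃.nonneg _) (h₁₂.sum_fst s.1 s.2.1) t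

theorem sum_glueKernel_snd (h₁₂ : IsTransitionCoupling P₁ P₂ R₁₂)
    (h₂₃ : IsTransitionCoupling P₂ P₃ R₂₃) (s : X × Y × Z) (x' : X) (y' : Y) :
    ∑ z', glueKernel R₁₂ R₂₃ P₂ s (x', y', z') = R₁₂ (s.1, s.2.1) (x', y') :=
  sum_glue_snd (h₁₂.nonneg _) (h₁₂.sum_fst s.1 s.2.1) (h₂₃.sum_snd s.2.1 s.2.2) x' y'

theorem sum_glueKernel_fst (h₁₂ : IsTransitionCoupling P₁ P₂ R₁₂)
    (h₂₃ : IsTransitionCoupling P₂ P₃ R₂₃) (s : X × Y × Z) (y' : Y) (z' : Z) :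
    ∑ x', glueKernel R₁₂ R₂₃ P₂ s (x', y', z') = R₂₃ s.2 (y', z') :=
  sum_glue_fst (h₂₃.nonneg _) (h₁₂.sum_fst s.1 s.2.1) (h₂₃.sum_snd s.2.1 s.2.2) y' z'

theorem glueKernel_mem_rowStochastic [DecidableEq X] [DecidableEq Y] [DecidableEq Z]
    (h₁₂ : IsTransitionCoupling P₁ P₂ R₁₂) (h₂₃ : IsTransitionCoupling P₂ P₃ R₂₃)
    (hP₁ : P₁ ∈ rowStochastic ℝ X) : glueKernel R₁₂ R₂₃ P₂ ∈ rowStochastic ℝ (X × Y × Z) := by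
  refine mem_rowStochastic_iff_sum.2 ⟨glueKernel_nonneg h₁₂ h₂₃, fun s => ?_⟩
  simp only [Fintype.sum_prod_type, sum_glueKernel_snd h₁₂ h₂₃, h₁₂.sum_snd]
  exact sum_row_of_mem_rowStochastic hP₁ s.1

theorem exists_stationary_glueKernel [DecidableEq X] [DecidableEq Y] [DecidableEq Z]
    (h₁₂ : IsTransitionCoupling P₁ P₂ R₁₂) (h₂₃ : IsTransitionCoupling P₂ P₃ R₂₃)
    (hP₁ : P₁ ∈ rowStochastic ℝ X) {μ₁₂ : X × Y → ℝ} {μ₂₃ : Y × Z → ℝ}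
    (hμ₁₂ : μ₁₂ ∈ stdSimplex ℝ (X × Y)) (hμ₂₃ : μ₂₃ ∈ stdSimplex ℝ (Y × Z))
    (hμR₁₂ : μ₁₂ ᵥ* R₁₂ = μ₁₂) (hμR₂₃ : μ₂₃ ᵥ* R₂₃ = μ₂₃)
    (hμ : ∀ y, ∑ x, μ₁₂ (x, y) = ∑ z, μ₂₃ (y, z)) :
    ∃ η ∈ stdSimplex ℝ (X × Y × Z), η ᵥ* glueKernel R₁₂ R₂₃ P₂ = η ∧
      marginal₁₂ η = μ₁₂ ∧ marginal₂₃ η = μ₂₃ := by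
  let K := stdSimplex ℝ (X × Y × Z) ∩ (marginal₁₂ ⁻¹' {μ₁₂} ∩ marginal₂₃ ⁻¹' {μ₂₃})
  have hK : IsCompact K := (isCompact_stdSimplex ℝ _).inter_right <|
    (isClosed_singleton.preimage (LinearMap.continuous_of_finiteDimensional _)).inter
      (isClosed_singleton.preimage (LinearMap.continuous_of_finiteDimensional _))
  have hKc : Convex ℝ K := (convex_stdSimplex ℝ _).inter <|
    ((convex_singleton _).linear_preimage _).inter ((convex_singleton _).linear_preimage _)
  set μ := glue μ₁₂ μ₂₃ fun y => ∑ z, μ₂₃ (y, z)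
  have hμ₁ : marginal₁₂ μ = μ₁₂ := funext fun p => sum_glue_snd hμ₁₂.1 hμ (fun _ => rfl) p.1 p.2
  have hμ₃ : marginal₂₃ μ = μ₂₃ := funext fun p => sum_glue_fst hμ₂₃.1 hμ (fun _ => rfl) p.1 p.2
  have hμK : μ ∈ K := ⟨⟨glue_nonneg hμ₁₂.1 hμ₂₃.1 hμ,
    by simpa [hμ₁, hμ₁₂.2] using (sum_marginal₁₂_mul μ 1).symm⟩, hμ₁, hμ₃⟩
  have hKQ : MapsTo (· ᵥ* glueKernel R₁₂ R₂₃ P₂) K K := by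
    rintro v ⟨hv, hv₁₂, hv₂₃⟩
    refine ⟨vecMul_mem_stdSimplex (glueKernel_mem_rowStochastic h₁₂ h₂₃ hP₁) hv, ?_, ?_⟩
    · simp_all [marginal₁₂_vecMul v (sum_glueKernel_snd h₁₂ h₂₃)]
    · simp_all [marginal₂₃_vecMul v (sum_glueKernel_fst h₁₂ h₂₃)]
  obtain ⟨η, ⟨hη, hη₁₂, hη₂₃⟩, hηQ⟩ := exists_vecMul_eq_self_mem hK hKc ⟨μ, hμK⟩ hKQ
  exact ⟨η, hη, hηQ, hη₁₂, hη₂₃⟩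

end GlueKernel

theorem exists_mem_stationaryCouplingCosts_le_add [Fintype X] [Fintype Y] [Fintype Z]
    [DecidableEq X] [DecidableEq Y] [DecidableEq Z] {P₁ : Matrix X X ℝ} {P₂ : Matrix Y Y ℝ}
    {P₃ : Matrix Z Z ℝ} (hP₁ : P₁ ∈ rowStochastic ℝ X) (hP₂ : ∀ y y', 0 ≤ P₂ y y')
    (hirr : MatIrreducible P₂) (hP₃ : P₃ ∈ rowStochastic ℝ Z) {c₁₂ : X → Y → ℝ}
    {c₂₃ : Y → Z → ℝ} {c₁₃ : X → Z → ℝ} (htri : ∀ x y z, c₁₃ x z ≤ c₁₂ x y + c₂₃ y z)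
    {a b : ℝ} (ha : a ∈ stationaryCouplingCosts c₁₂ P₁ P₂)
    (hb : b ∈ stationaryCouplingCosts c₂₃ P₂ P₃) :
    ∃ v ∈ stationaryCouplingCosts c₁₃ P₁ P₃, v ≤ a + b := by
  obtain ⟨μ₁₂, R₁₂, h₁₂, hμ₁₂, hμR₁₂, rfl⟩ := ha
  obtain ⟨μ₂₃, R₂₃, h₂₃, hμ₂₃, hμR₂₃, rfl⟩ := hb
  have hμ : (fun y => ∑ x, μ₁₂ (x, y)) = fun y => ∑ z, μ₂₃ (y, z) :=
    eq_of_vecMul_eq_self hP₂ hirr (marginal_snd_mem_stdSimplex hμ₁₂)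
      (marginal_fst_mem_stdSimplex hμ₂₃) (h₁₂.vecMul_marginal_snd_eq_self hμR₁₂)
      (h₂₃.vecMul_marginal_fst_eq_self hμR₂₃)
  obtain ⟨η, hη, hηQ, hη₁₂, hη₂₃⟩ :=
    exists_stationary_glueKernel h₁₂ h₂₃ hP₁ hμ₁₂ hμ₂₃ hμR₁₂ hμR₂₃ (congrFun hμ)
  obtain ⟨R₁₃, h₁₃, hR₁₃⟩ := exists_isTransitionCoupling_marginal₁₃ hP₁ hP₃
    (glueKernel_nonneg h₁₂ h₂₃)
    (fun x y z x' => by simp only [sum_glueKernel_snd h₁₂ h₂₃, h₁₂.sum_snd])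
    (fun x y z z' => by simp only [sum_glueKernel_fst h₁₂ h₂₃, h₂₃.sum_fst]) hη.1 hηQ
  refine ⟨_, ⟨_, R₁₃, h₁₃, marginal₁₃_mem_stdSimplex η hη, hR₁₃, rfl⟩, ?_⟩
  rw [← hη₁₂, ← hη₂₃]
  exact sum_cost_marginal₁₃_le η htri hη.1

theorem stmt_11_general (d : ℕ)
    (P₁ P₂ P₃ : Matrix (Fin d) (Fin d) ℝ)
    (h₁ : (∀ x x', 0 ≤ P₁ x x') ∧ ∀ x, ∑ x', P₁ x x' = 1)
    (h₂ : (∀ x x', 0 ≤ P₂ x x') ∧ ∀ x, ∑ x', P₂ x x' = 1)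
    (h₃ : (∀ x x', 0 ≤ P₃ x x') ∧ ∀ x, ∑ x', P₃ x x' = 1)
    (hirr₂ : MatIrreducible P₂)
    (c : Fin d → Fin d → ℝ)
    (htri : ∀ x y z, c x z ≤ c x y + c y z) :
    otcCost d c P₁ P₃ ≤ otcCost d c P₁ P₂ + otcCost d c P₂ P₃ := by
  rcases isEmpty_or_nonempty (Fin d) with _ | _
  · simp [otcCost]
  have hP₁ := mem_rowStochastic_iff_sum.2 h₁
  have hP₂ := mem_rowStochastic_iff_sum.2 h₂
  have hP₃ := mem_rowStochastic_iff_sum.2 h₃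
  have hne₁₂ := stationaryCouplingCosts_nonempty c hP₁ hP₂
  have hne₂₃ := stationaryCouplingCosts_nonempty c hP₂ hP₃
  simp only [otcCost_eq_sInf]
  rw [← csInf_add hne₁₂ (bddBelow_stationaryCouplingCosts c) hne₂₃
    (bddBelow_stationaryCouplingCosts c)]
  refine le_csInf (hne₁₂.add hne₂₃) ?_
  rintro _ ⟨a, ha, b, hb, rfl⟩
  obtain ⟨v, hv, hvab⟩ := exists_mem_stationaryCouplingCosts_le_add hP₁ h₂.1 hirr₂ hP₃ htri ha hb
  exact (csInf_le (bddBelow_stationaryCouplingCosts c) hv).trans hvab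

/-- the optimal transition coupling cost satisfies the triangle inequality
when the underlying cost does. -/
theorem stmt_11 (d : ℕ)
    (P₁ P₂ P₃ : Matrix (Fin d) (Fin d) ℝ)
    (h₁ : (∀ x x', 0 ≤ P₁ x x') ∧ ∀ x, ∑ x', P₁ x x' = 1)
    (h₂ : (∀ x x', 0 ≤ P₂ x x') ∧ ∀ x, ∑ x', P₂ x x' = 1)
    (h₃ : (∀ x x', 0 ≤ P₃ x x') ∧ ∀ x, ∑ x', P₃ x x' = 1)
    (hirr₁ : MatIrreducible P₁) (hirr₂ : MatIrreducible P₂) (hirr₃ : MatIrreducible P₃)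
    (c : Fin d → Fin d → ℝ)
    (hc : ∀ x y, 0 ≤ c x y)
    (htri : ∀ x y z, c x z ≤ c x y + c y z) :
    otcCost d c P₁ P₃ ≤ otcCost d c P₁ P₂ + otcCost d c P₂ P₃ :=
  stmt_11_general d P₁ P₂ P₃ h₁ h₂ h₃ hirr₂ c htri
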